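/- arXiv:2101.03860 — 3 statements merged into one kernel-verified Lean document; each statement's English description precedes it below -/
import Mathlib

section
/- Under the hypotheses of the lapse deformation: if 0 < 2r^aD_ak + k² + k_{ab}² < βk² on [0,ε) and ⁽³⁾R ≥ 0, and the deformed Ricci scalar satisfies ⁽³⁾R̂ = ⁽³⁾R + (1-u⁻²)(2r^aD_ak + k² + k_{ab}²) + 2u⁻²k²·∂ᵣlog u with u(r) = 1 - exp(-Cδ/(ε-r)), then choosing C > βδ makes ⁽³⁾R̂ > 0 on [0,ε). -/
open Real

/- With `a := Cδ/(ε - r)²` one has `∂ᵣ log u = u⁻¹ a (1 - u)`, and multiplying `⁽³⁾R̂` by `u³`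
gives `u³ ⁽³⁾R + (1 - u) (2 a k² - u (1 + u) P)` where `P := 2 r^aD_ak + k² + k_{ab}²`.
Since `0 < u < 1` and `P < β k²`, the bracket is positive as soon as `β ≤ a`, which is where
`C > βδ` and `ε - r < δ` enter. -/

theorem one_sub_exp_neg_div_mem_Ioo {c t : ℝ} (hc : 0 < c) (ht : 0 < t) :
    1 - exp (-c / t) ∈ Set.Ioo 0 1 := by
  have hneg : -c / t < 0 := div_neg_of_neg_of_pos (neg_neg_of_pos hc) ht
  constructor
  · linarith [exp_lt_one_iff.mpr hneg]
  · linarith [exp_pos (-c / t)]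

theorem le_mul_div_sq_of_lt {β C δ t : ℝ} (hβ : 0 ≤ β) (ht : 0 < t) (htδ : t ≤ δ)
    (hC : β * δ < C) : β ≤ C * δ / t ^ 2 := by
  rw [le_div_iff₀ (by positivity)]
  calc β * t ^ 2 ≤ β * δ ^ 2 := mul_le_mul_of_nonneg_left (pow_le_pow_left₀ ht.le htδ 2) hβ
    _ = β * δ * δ := by ring
    _ ≤ C * δ := mul_le_mul_of_nonneg_right hC.le (ht.le.trans htδ)

theorem lapse_deformed_scalar_pos {u a β P K R : ℝ} (hu0 : 0 < u) (hu1 : u < 1) (hR : 0 ≤ R)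
    (hK : 0 ≤ K) (hP : 0 < P) (hPK : P < β * K) (hβa : β ≤ a) :
    0 < R + (1 - (u⁻¹) ^ 2) * P + 2 * (u⁻¹) ^ 2 * K * (u⁻¹ * a * (1 - u)) := by
  have hexpand : R + (1 - (u⁻¹) ^ 2) * P + 2 * (u⁻¹) ^ 2 * K * (u⁻¹ * a * (1 - u)) =
      (u ^ 3 * R + (1 - u) * (2 * a * K - u * (1 + u) * P)) / u ^ 3 := by
    field_simp
    ring
  have hbracket : 0 < 2 * a * K - u * (1 + u) * P := by
    have hβK : β * K ≤ a * K := mul_le_mul_of_nonneg_right hβa hK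
    nlinarith [mul_pos hP (show 0 < 2 - u * (1 + u) by nlinarith)]
  rw [hexpand]
  have := mul_pos (sub_pos.mpr hu1) hbracket
  positivity

theorem deformed_ricci_positive_general (C δ ε β : ℝ) (hδ : δ > 0)
    (hεδ : ε < δ) (hβ : β > 0) (hC : C > β * δ)
    (k rDk kab2 R3 Rhat : ℝ → ℝ)
    (u : ℝ → ℝ) (hu : u = fun r : ℝ => 1 - Real.exp (-(C * δ) / (ε - r)))
    (logu' : ℝ → ℝ)
    (hlogu' : logu' = fun r : ℝ =>
      (u r)⁻¹ * (C * δ / (ε - r)^2) * Real.exp (-(C * δ) / (ε - r)))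
    (hbound : ∀ r ∈ Set.Ico (0:ℝ) ε,
      0 < 2 * rDk r + (k r)^2 + kab2 r ∧
      2 * rDk r + (k r)^2 + kab2 r < β * (k r)^2)
    (hR3 : ∀ r ∈ Set.Ico (0:ℝ) ε, R3 r ≥ 0)
    (hRhat : ∀ r ∈ Set.Ico (0:ℝ) ε,
      Rhat r = R3 r + (1 - ((u r)⁻¹)^2) * (2 * rDk r + (k r)^2 + kab2 r)
        + 2 * ((u r)⁻¹)^2 * (k r)^2 * logu' r) :
    ∀ r ∈ Set.Ico (0:ℝ) ε, Rhat r > 0 := by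
  intro r hr
  have ht : 0 < ε - r := sub_pos.mpr hr.2
  have hCδ : 0 < C * δ := mul_pos (by nlinarith) hδ
  obtain ⟨hu0, hu1⟩ : u r ∈ Set.Ioo 0 1 := hu ▸ one_sub_exp_neg_div_mem_Ioo hCδ ht
  have hlogu'_eq : logu' r = (u r)⁻¹ * (C * δ / (ε - r) ^ 2) * (1 - u r) := by
    simp only [hlogu', hu, sub_sub_cancel]
  rw [hRhat r hr, hlogu'_eq]
  exact lapse_deformed_scalar_pos hu0 hu1 (hR3 r hr) (sq_nonneg _) (hbound r hr).1
    (hbound r hr).2 (le_mul_div_sq_of_lt hβ.le ht (by linarith [hr.1]) hC)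

theorem deformed_ricci_positive (C δ ε β : ℝ) (hδ : δ > 0) (hε : ε > 0)
    (hεδ : ε < δ) (hβ : β > 0) (hC : C > β * δ)
    (k rDk kab2 R3 Rhat : ℝ → ℝ)
    (u : ℝ → ℝ) (hu : u = fun r : ℝ => 1 - Real.exp (-(C * δ) / (ε - r)))
    (logu' : ℝ → ℝ)
    (hlogu' : logu' = fun r : ℝ =>
      (u r)⁻¹ * (C * δ / (ε - r)^2) * Real.exp (-(C * δ) / (ε - r)))
    (hk : ∀ r ∈ Set.Ico (0:ℝ) ε, k r > 0)
    (hbound : ∀ r ∈ Set.Ico (0:ℝ) ε,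
      0 < 2 * rDk r + (k r)^2 + kab2 r ∧
      2 * rDk r + (k r)^2 + kab2 r < β * (k r)^2)
    (hR3 : ∀ r ∈ Set.Ico (0:ℝ) ε, R3 r ≥ 0)
    (hRhat : ∀ r ∈ Set.Ico (0:ℝ) ε,
      Rhat r = R3 r + (1 - ((u r)⁻¹)^2) * (2 * rDk r + (k r)^2 + kab2 r)
        + 2 * ((u r)⁻¹)^2 * (k r)^2 * logu' r) :
    ∀ r ∈ Set.Ico (0:ℝ) ε, Rhat r > 0 :=
  deformed_ricci_positive_general C δ ε β hδ hεδ hβ hC k rDk kab2 R3 Rhat u hu logu' hlogu' hbound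
    hR3 hRhat
end

section
/- Let F(r) = r·f(r) with f(r) = (1 + exp(ε/r + ε/(r+ε) + 1))⁻¹ on (-ε, 0). Then F'(r) < 1 for all r ∈ (-ε, 0). -/
open Real

/-!
Write `f = σ ∘ h` with `σ` the logistic sigmoid and `h r = -(ε/r + ε/(r+ε) + 1)`, which is
increasing. Then `(r f)' = σ(h r) + r σ'(h r) h'(r)`, and for `r < 0` the second term is
nonpositive, so `(r f)' ≤ σ(h r) < 1`.
-/

section

variable {h : ℝ → ℝ} {h' r : ℝ}

theorem hasDerivAt_mul_sigmoid_comp (hh : HasDerivAt h h' r) :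
    HasDerivAt (fun x => x * sigmoid (h x))
      (sigmoid (h r) + r * (sigmoid (h r) * (1 - sigmoid (h r)) * h')) r := by
  simpa using (hasDerivAt_id r).fun_mul ((hasDerivAt_sigmoid (h r)).comp r hh)

theorem deriv_mul_sigmoid_comp_le (hh : HasDerivAt h h' r) (hh' : 0 ≤ h') (hr : r ≤ 0) :
    deriv (fun x => x * sigmoid (h x)) r ≤ sigmoid (h r) := by
  rw [(hasDerivAt_mul_sigmoid_comp hh).deriv]
  have hσ' : 0 ≤ sigmoid (h r) * (1 - sigmoid (h r)) * h' :=
    mul_nonneg (mul_nonneg (sigmoid_nonneg _) (sub_nonneg.2 (sigmoid_le_one _))) hh'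
  linarith [mul_nonpos_of_nonpos_of_nonneg hr hσ']

end

theorem hasDerivAt_div_add_div_add_const {ε r : ℝ} (c : ℝ) (hr : r ≠ 0) (hrε : r + ε ≠ 0) :
    HasDerivAt (fun x => ε / x + ε / (x + ε) + c) (-(ε / r ^ 2) - ε / (r + ε) ^ 2) r := by
  have h₁ : HasDerivAt (fun x => ε / x) (-(ε / r ^ 2)) r := by
    simpa [div_eq_mul_inv] using (hasDerivAt_inv hr).const_mul ε
  have h₂ : HasDerivAt (fun x => ε / (x + ε)) (-(ε / (r + ε) ^ 2)) r := by
    simpa [div_eq_mul_inv] using (((hasDerivAt_id r).add_const ε).inv hrε).const_mul ε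
  simpa only [sub_eq_add_neg] using (h₁.fun_add h₂).add_const c

theorem rf_deriv_lt_one_general (ε : ℝ)
    (f F : ℝ → ℝ)
    (hf : f = fun r : ℝ => (1 + Real.exp (ε / r + ε / (r + ε) + 1))⁻¹)
    (hF : F = fun r : ℝ => r * f r) :
    ∀ r ∈ Set.Ioo (-ε) (0:ℝ), deriv F r < 1 := by
  rintro r ⟨hεr, hr⟩
  have hε : 0 ≤ ε := by linarith
  have hf_sigmoid : f = fun x => sigmoid (-(ε / x + ε / (x + ε) + 1)) := by
    simp only [hf, sigmoid_def, neg_neg]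
  have hg := hasDerivAt_div_add_div_add_const 1 hr.ne (by linarith : r + ε ≠ 0)
  have hh' : 0 ≤ -(-(ε / r ^ 2) - ε / (r + ε) ^ 2) := by
    rw [neg_sub, sub_neg_eq_add]
    positivity
  subst hF hf_sigmoid
  calc deriv (fun x => x * sigmoid (-(ε / x + ε / (x + ε) + 1))) r
      ≤ sigmoid (-(ε / r + ε / (r + ε) + 1)) := deriv_mul_sigmoid_comp_le hg.neg hh' hr.le
    _ < 1 := sigmoid_lt_one _

theorem rf_deriv_lt_one (ε : ℝ) (hε : ε > 0)
    (f F : ℝ → ℝ)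
    (hf : f = fun r : ℝ => (1 + Real.exp (ε / r + ε / (r + ε) + 1))⁻¹)
    (hF : F = fun r : ℝ => r * f r) :
    ∀ r ∈ Set.Ioo (-ε) (0:ℝ), deriv F r < 1 :=
  rf_deriv_lt_one_general ε f F hf hF
end

section
/- Let F(r) = r·f(r) with f(r) = (1 + exp(ε/r + ε/(r+ε) + 1))⁻¹ on (-ε, 0). Then F'(r) > -1 for all r ∈ (-ε, 0); hence |F'(r)| < 1 throughout. -/
open Real

lemma cubic_le_exp {x : ℝ} (hx : 0 ≤ x) : 1 + x + x^2/2 + x^3/6 ≤ Real.exp x := by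
  have h := Real.sum_le_exp_of_nonneg hx 4
  have he : ∑ i ∈ Finset.range 4, x ^ i / i.factorial = 1 + x + x^2/2 + x^3/6 := by
    simp only [Finset.sum_range_succ, Finset.sum_range_zero, Nat.factorial]
    push_cast
    ring
  rw [he] at h
  exact h

lemma key_ineq (t : ℝ) (ht : 0 < t) :
    (1 + Real.exp (t + 1 - 1/t))^2 + (1 + Real.exp (t + 1 - 1/t))
      - (t^2 + t + 1 + 1/t) * Real.exp (t + 1 - 1/t) > 0 := by
  have hti : t * (1/t) = 1 := mul_one_div_cancel ht.ne'
  have h1t : (0:ℝ) < 1/t := by positivity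
  obtain ⟨x, hxdef⟩ : ∃ x : ℝ, x = t + 1 - 1/t := ⟨_, rfl⟩
  rw [← hxdef]
  obtain ⟨E, hEdef⟩ : ∃ E : ℝ, E = Real.exp x := ⟨_, rfl⟩
  rw [← hEdef]
  have hE : 0 < E := hEdef ▸ Real.exp_pos x
  rcases le_or_gt t 1 with hcase | hcase
  · -- t ≤ 1 : C ≤ 5 - x
    have hC : t^2 + t + 1 + 1/t ≤ 5 - x := by
      rw [hxdef]; nlinarith [mul_pos ht ht]
    have hEx : E - 1 ≤ E * x := by
      have h := Real.add_one_le_exp (-x)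
      rw [Real.exp_neg, ← hEdef] at h
      have h2 := mul_le_mul_of_nonneg_left h hE.le
      rw [mul_inv_cancel₀ hE.ne'] at h2
      nlinarith
    nlinarith [sq_nonneg (E - 1), mul_le_mul_of_nonneg_right hC hE.le]
  · -- t > 1 : x ≥ 1, C ≤ x² + x + 2
    have hx1 : 1 ≤ x := by
      rw [hxdef]
      have h2 : 1/t < 1 := by rw [div_lt_one ht]; linarith
      nlinarith
    have hC : t^2 + t + 1 + 1/t ≤ x^2 + x + 2 := by
      rw [hxdef]
      nlinarith [mul_pos (mul_pos ht ht) ht, sq_nonneg (t - 1),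
        mul_nonneg (mul_nonneg (sub_nonneg.2 hcase.le) (sub_nonneg.2 hcase.le)) ht.le,
        mul_nonneg (sub_nonneg.2 hcase.le) (sq_nonneg (1/t)), sq_nonneg (t*t - 1),
        mul_pos ht h1t]
    have hcub : 1 + x + x^2/2 + x^3/6 ≤ E := by
      rw [hEdef]; exact cubic_le_exp (by linarith)
    have hpoly : 0 ≤ x^3/6 - x^2/2 + 2 := by
      nlinarith [mul_nonneg (by linarith : (0:ℝ) ≤ x) (sq_nonneg (x - 2)), sq_nonneg (x-2)]
    have h6 : 0 ≤ E * (E - (x^2 + x - 1)) :=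
      mul_nonneg hE.le (by nlinarith)
    nlinarith [mul_le_mul_of_nonneg_right hC hE.le]

theorem rf_deriv_gt_neg_one (ε : ℝ) (hε : ε > 0)
    (f F : ℝ → ℝ)
    (hf : f = fun r : ℝ => (1 + Real.exp (ε / r + ε / (r + ε) + 1))⁻¹)
    (hF : F = fun r : ℝ => r * f r) :
    ∀ r ∈ Set.Ioo (-ε) (0:ℝ), deriv F r > -1 ∧ |deriv F r| < 1 := by
  intro r hr
  obtain ⟨hr1, hr2⟩ := hr
  have hrne : r ≠ 0 := ne_of_lt hr2
  have hre : 0 < r + ε := by linarith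
  have hrene : r + ε ≠ 0 := hre.ne'
  have hg1 : HasDerivAt (fun s : ℝ => ε / s) (-(ε / r^2)) r := by
    simpa [div_eq_mul_inv, mul_comm, neg_div] using (hasDerivAt_inv hrne).const_mul ε
  have hg2 : HasDerivAt (fun s : ℝ => ε / (s + ε)) (-(ε / (r+ε)^2)) r := by
    have h0 : HasDerivAt (fun s : ℝ => s + ε) 1 r := (hasDerivAt_id r).add_const ε
    have h1 := (h0.inv hrene).const_mul ε
    simpa [div_eq_mul_inv, mul_comm, neg_div, mul_neg] using h1
  have hg : HasDerivAt (fun s : ℝ => ε / s + ε / (s + ε) + 1)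
      (-(ε / r^2) + -(ε / (r+ε)^2)) r := (hg1.add hg2).add_const 1
  set x : ℝ := ε / r + ε / (r + ε) + 1 with hxdef
  set E : ℝ := Real.exp x with hEdef
  have hE : 0 < E := Real.exp_pos x
  set g' : ℝ := -(ε / r^2) + -(ε / (r+ε)^2) with hg'def
  have hexp : HasDerivAt (fun s : ℝ => 1 + Real.exp (ε / s + ε / (s + ε) + 1))
      (E * g') r := by
    simpa [hEdef, hxdef, mul_comm] using (hg.exp.const_add 1)
  have hDne : (1 : ℝ) + E ≠ 0 := by positivity
  have hfd : HasDerivAt f (-(E * g') / (1 + E)^2) r := by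
    rw [hf]
    exact hexp.inv hDne
  have hFd : HasDerivAt F (1 * f r + r * (-(E * g') / (1 + E)^2)) r := by
    rw [hF]
    exact (hasDerivAt_id r).mul hfd
  have hderiv : deriv F r = (1 + E)⁻¹ + r * (-(E * g') / (1 + E)^2) := by
    rw [hFd.deriv, hf]
    simp [hxdef, hEdef]
  -- substitution t = -r/(r+ε)
  set t : ℝ := -r / (r + ε) with htdef
  have ht : 0 < t := div_pos (by linarith) hre
  have hxt : x = t + 1 - 1/t := by
    rw [hxdef, htdef]
    field_simp [hrne]
    ring
  have hCr : r * g' = t^2 + t + 1 + 1/t := by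
    rw [hg'def, htdef]
    field_simp [hrne]
    ring
  have key := key_ineq t ht
  rw [← hxt, ← hEdef] at key
  have hC : 0 < t^2 + t + 1 + 1/t := by positivity
  have hD2 : (0:ℝ) < (1+E)^2 := by positivity
  have hform : deriv F r = (1+E)⁻¹ - (t^2 + t + 1 + 1/t) * E / (1+E)^2 := by
    rw [hderiv, ← hCr]
    ring
  have hlow : deriv F r > -1 := by
    have heq : deriv F r + 1 = ((1+E)^2 + (1+E) - (t^2 + t + 1 + 1/t)*E)/(1+E)^2 := by
      rw [hform]
      field_simp [hrne]
      ring
    have hpos := div_pos key hD2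
    linarith
  have hup : deriv F r < 1 := by
    rw [hform]
    have h1 : (1+E)⁻¹ < 1 := inv_lt_one_of_one_lt₀ (by linarith)
    have h2 : 0 < (t^2 + t + 1 + 1/t) * E / (1+E)^2 := by positivity
    linarith
  exact ⟨hlow, abs_lt.mpr ⟨hlow, hup⟩⟩
end
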